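/- Let X be a finite alphabet and t, t' two templates of length n with sequence sets D(t), D(t') of sizes N = |D(t)|, N' = |D(t')|. Then, counting with multiplicity, for every position j ∈ [n] and token x ∈ X, the number of occurrences of x at position j in N' copies of D(t) equals the number of occurrences of x at position j in N copies of D(t'), both equal to N·N'/|X|. -/

import Mathlib

/-- The set of sequences generated by substituting the wildcards of a
template `t` by injective maps into the token alphabet `X`. -/
def templateSeqs {W X : Type*} [Fintype W] [DecidableEq W] [Fintype X] [DecidableEq X]
    {n : ℕ} (t : Fin n → W) : Finset (Fin n → X) :=
  (Finset.univ.filter (Function.Injective : (W → X) → Prop)).image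
    (fun s => fun i => s (t i))

/-!
Relabelling the tokens by a permutation of `X` maps `D(t)` onto itself, and the transposition
`(x y)` exchanges the sequences having `x` at position `j` with those having `y` there. So the
`|X|` fibres of `f ↦ f j` on `D(t)` are equinumerous: `|X| · |D(t) ∩ {f j = x}| = |D(t)|`.
Substituting this for `N` and `N'` turns all three identities into ring identities.
-/

open Finset

section PermInvariant

variable {ι X : Type*} [DecidableEq X]

theorem card_filter_apply_eq_eq_of_forall_perm_comp_mem (S : Finset (ι → X))
    (hS : ∀ σ : Equiv.Perm X, ∀ f ∈ S, σ ∘ f ∈ S) (j : ι) (x y : X) :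
    #(S.filter fun f => f j = x) = #(S.filter fun f => f j = y) := by
  refine card_nbij' (Equiv.swap x y ∘ ·) (Equiv.swap x y ∘ ·) ?_ ?_ ?_ ?_
  · intro f hf
    simp only [coe_filter, Set.mem_ofPred_eq] at hf ⊢
    exact ⟨hS _ f hf.1, by simp [hf.2]⟩
  · intro f hf
    simp only [coe_filter, Set.mem_ofPred_eq] at hf ⊢
    exact ⟨hS _ f hf.1, by simp [hf.2]⟩
  · exact fun f _ => funext fun i => Equiv.swap_apply_self x y (f i)
  · exact fun f _ => funext fun i => Equiv.swap_apply_self x y (f i)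

theorem card_mul_card_filter_apply_eq_of_forall_perm_comp_mem [Fintype X] (S : Finset (ι → X))
    (hS : ∀ σ : Equiv.Perm X, ∀ f ∈ S, σ ∘ f ∈ S) (j : ι) (x : X) :
    Fintype.card X * #(S.filter fun f => f j = x) = #S := by
  calc Fintype.card X * #(S.filter fun f => f j = x)
      = ∑ y : X, #(S.filter fun f => f j = y) := by
        rw [sum_congr rfl fun y _ => card_filter_apply_eq_eq_of_forall_perm_comp_mem S hS j y x,
          sum_const, card_univ, smul_eq_mul]
    _ = #S := (card_eq_sum_card_fiberwise fun f _ => mem_univ (f j)).symm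

end PermInvariant

section Template

variable {W X : Type*} [Fintype W] [DecidableEq W] [Fintype X] [DecidableEq X] {n : ℕ}

theorem perm_comp_mem_templateSeqs (t : Fin n → W) (σ : Equiv.Perm X) {f : Fin n → X}
    (hf : f ∈ templateSeqs t) : σ ∘ f ∈ templateSeqs t := by
  obtain ⟨s, hs, rfl⟩ := mem_image.mp hf
  exact mem_image.mpr ⟨σ ∘ s, by simpa using σ.injective.comp (mem_filter.mp hs).2, rfl⟩

theorem card_mul_card_filter_templateSeqs_apply_eq (t : Fin n → W) (j : Fin n) (x : X) :
    Fintype.card X * #((templateSeqs (X := X) t).filter fun f => f j = x) =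
      #(templateSeqs (X := X) t) :=
  card_mul_card_filter_apply_eq_of_forall_perm_comp_mem _
    (fun σ _ => perm_comp_mem_templateSeqs t σ) j x

end Template

theorem stmt_7_general {W W' X : Type*} [Fintype W] [DecidableEq W] [Fintype W'] [DecidableEq W']
    [Fintype X] [DecidableEq X]
    {n : ℕ} (t : Fin n → W) (t' : Fin n → W')
    (N N' : ℕ) (hN : N = (templateSeqs (X := X) t).card)
    (hN' : N' = (templateSeqs (X := X) t').card)
    (j : Fin n) (x : X) :
    N' * ((templateSeqs (X := X) t).filter (fun f => f j = x)).card =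
      N * ((templateSeqs (X := X) t').filter (fun f => f j = x)).card ∧
    Fintype.card X * (N' * ((templateSeqs (X := X) t).filter (fun f => f j = x)).card) = N * N' ∧
    Fintype.card X * (N * ((templateSeqs (X := X) t').filter (fun f => f j = x)).card) = N * N' := by
  rw [hN, hN', ← card_mul_card_filter_templateSeqs_apply_eq t j x,
    ← card_mul_card_filter_templateSeqs_apply_eq t' j x]
  refine ⟨?_, ?_, ?_⟩ <;> ring

theorem stmt_7 {W W' X : Type*} [Fintype W] [DecidableEq W] [Fintype W'] [DecidableEq W']
    [Fintype X] [DecidableEq X]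
    {n : ℕ} (t : Fin n → W) (t' : Fin n → W')
    (ht : Function.Surjective t) (ht' : Function.Surjective t')
    (N N' : ℕ) (hN : N = (templateSeqs (X := X) t).card)
    (hN' : N' = (templateSeqs (X := X) t').card)
    (j : Fin n) (x : X) :
    N' * ((templateSeqs (X := X) t).filter (fun f => f j = x)).card =
      N * ((templateSeqs (X := X) t').filter (fun f => f j = x)).card ∧
    Fintype.card X * (N' * ((templateSeqs (X := X) t).filter (fun f => f j = x)).card) = N * N' ∧
    Fintype.card X * (N * ((templateSeqs (X := X) t').filter (fun f => f j = x)).card) = N * N' :=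
  stmt_7_general t t' N N' hN hN' j x
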